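/- Fix λ, χ ∈ ℂ and let E_{λ,χ} be the sl_2-module with basis {v_{λ+2n}}_{n∈ℤ} and action h·v_{λ+2n} = (λ+2n)v_{λ+2n}, e·v_{λ+2n} = v_{λ+2n+2}, f·v_{λ+2n} = (1/2)(χ - (1/2)(λ+2n-2)² - (λ+2n-2))v_{λ+2n-2}. Then E_{λ,χ} has a nonzero proper sl_2-submodule if and only if there exists μ ∈ λ + 2ℤ with χ = μ²/2 + μ. -/

import Mathlib

/-! The operator `h` is diagonal with pairwise distinct eigenvalues `λ + 2n`, so every nonzero
`h`-stable subspace contains a basis vector `v_{λ+2n}`. From there `e` raises the index by one,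
and `f` lowers it by one up to the scalar `c_n = fCoeff λ χ n`, the coefficient of
`f·v_{λ+2n}`. Hence if no `c_n` vanishes, a nonzero submodule contains every basis vector.
Conversely, if `c_{n+1} = 0`, i.e. `χ = μ²/2 + μ` for `μ = λ + 2n`, then `f` kills `v_{λ+2n+2}`
and the span of the `v_{λ+2m}` with `m > n` is a proper submodule. -/

open Finsupp

/-- The action of `e` on `E_{λ,χ} = ⊕_{n∈ℤ} ℂ v_{λ+2n}` (with `v_{λ+2n}` encoded as
`single n 1`): `e·v_{λ+2n} = v_{λ+2n+2}`. -/
noncomputable def eOp : (ℤ →₀ ℂ) →ₗ[ℂ] (ℤ →₀ ℂ) :=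
  Finsupp.lsum ℂ fun n => Finsupp.lsingle (n + 1)

/-- The action of `h`: `h·v_{λ+2n} = (λ+2n)·v_{λ+2n}`. -/
noncomputable def hOp (lam : ℂ) : (ℤ →₀ ℂ) →ₗ[ℂ] (ℤ →₀ ℂ) :=
  Finsupp.lsum ℂ fun n => (lam + 2 * (n : ℂ)) • Finsupp.lsingle n

/-- The action of `f`:
`f·v_{λ+2n} = (1/2)(χ - (1/2)(λ+2n-2)² - (λ+2n-2))·v_{λ+2n-2}`. -/
noncomputable def fOp (lam χ : ℂ) : (ℤ →₀ ℂ) →ₗ[ℂ] (ℤ →₀ ℂ) :=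
  Finsupp.lsum ℂ fun n =>
    ((1 / 2) * (χ - (1 / 2) * (lam + 2 * (n : ℂ) - 2) ^ 2 - (lam + 2 * (n : ℂ) - 2))) •
      Finsupp.lsingle (n - 1)

namespace Finsupp

variable {K ι : Type*} [Field K]

theorem eq_top_of_forall_single_one_mem {S : Submodule K (ι →₀ K)}
    (h : ∀ i, single i (1 : K) ∈ S) : S = ⊤ := by
  rw [eq_top_iff, ← Finsupp.basisSingleOne.span_eq, Submodule.span_le]
  rintro _ ⟨i, rfl⟩
  simpa using h i

theorem mapsTo_supported_of_single_one {T : (ι →₀ K) →ₗ[K] (ι →₀ K)} {s : Set ι}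
    (h : ∀ i ∈ s, T (single i 1) ∈ supported K K s) :
    ∀ v ∈ supported K K s, T v ∈ supported K K s := by
  have hle : (supported K K s).map T ≤ supported K K s := by
    rw [supported_eq_span_single, Submodule.map_span_le]
    rintro _ ⟨i, hi, rfl⟩
    simpa [← supported_eq_span_single] using h i hi
  exact fun v hv => hle ⟨v, hv, rfl⟩

variable {T : (ι →₀ K) →ₗ[K] (ι →₀ K)} {w : ι → K}

theorem apply_eq_mul_of_diagonal (hT : ∀ i a, T (single i a) = w i • single i a)
    (v : ι →₀ K) (j : ι) : T v j = w j * v j := by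
  induction v using Finsupp.induction_linear with
  | zero => simp
  | add f g hf hg => simp [hf, hg, mul_add]
  | single i a =>
    rw [hT, smul_apply, smul_eq_mul]
    rcases eq_or_ne i j with rfl | hij
    · rfl
    · simp [hij]

theorem exists_single_one_mem_of_diagonal (hw : Function.Injective w)
    (hT : ∀ i a, T (single i a) = w i • single i a) {S : Submodule K (ι →₀ K)}
    (hS : ∀ v ∈ S, T v ∈ S) {v : ι →₀ K} (hvS : v ∈ S) (hv : v ≠ 0) :
    ∃ i, single i (1 : K) ∈ S := by
  induction hk : v.support.card using Nat.strong_induction_on generalizing v with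
  | _ k ih =>
  obtain ⟨i, hi⟩ := support_nonempty_iff.mpr hv
  -- `T - w i` kills the `i`-th coordinate of `v` and rescales the others by nonzero scalars.
  set u := T v - w i • v with hu_def
  have hu : ∀ j, u j = (w j - w i) * v j := fun j => by
    simp [hu_def, apply_eq_mul_of_diagonal hT, sub_mul]
  have huS : u ∈ S := S.sub_mem (hS v hvS) (S.smul_mem _ hvS)
  by_cases hu0 : u = 0
  · have hsupp : v.support ⊆ {i} := fun j hj => by
      by_contra hji
      have hwj : w j - w i ≠ 0 := sub_ne_zero.mpr (hw.ne (by simpa using hji))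
      have := hu j
      simp only [hu0, coe_zero, Pi.zero_apply] at this
      exact mem_support_iff.mp hj ((mul_eq_zero.mp this.symm).resolve_left hwj)
    obtain ⟨b, rfl⟩ := support_subset_singleton'.mp hsupp
    have hb : b ≠ 0 := by simpa using hv
    refine ⟨i, ?_⟩
    simpa [smul_single, inv_mul_cancel₀ hb] using S.smul_mem b⁻¹ hvS
  · have hsub : u.support ⊆ v.support := fun j hj =>
      mem_support_iff.mpr fun hvj => mem_support_iff.mp hj (by rw [hu, hvj, mul_zero])
    have hlt : u.support.card < k := hk ▸ Finset.card_lt_card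
      ((Finset.ssubset_iff_of_subset hsub).mpr ⟨i, hi, by simp [hu]⟩)
    exact ih _ hlt huS hu0 rfl

end Finsupp

noncomputable def fCoeff (lam χ : ℂ) (n : ℤ) : ℂ :=
  (1 / 2) * (χ - (1 / 2) * (lam + 2 * (n : ℂ) - 2) ^ 2 - (lam + 2 * (n : ℂ) - 2))

theorem fCoeff_add_one_eq_zero_iff (lam χ : ℂ) (n : ℤ) :
    fCoeff lam χ (n + 1) = 0 ↔ χ = (lam + 2 * (n : ℂ)) ^ 2 / 2 + (lam + 2 * (n : ℂ)) := by
  rw [fCoeff]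
  push_cast
  exact ⟨fun h => by linear_combination 2 * h, fun h => by linear_combination h / 2⟩

theorem eOp_single (n : ℤ) (a : ℂ) : eOp (single n a) = single (n + 1) a := by
  rw [eOp, lsum_single, lsingle_apply]

theorem hOp_single (lam : ℂ) (n : ℤ) (a : ℂ) :
    hOp lam (single n a) = (lam + 2 * (n : ℂ)) • single n a := by
  rw [hOp, lsum_single, LinearMap.smul_apply, lsingle_apply]

theorem fOp_single (lam χ : ℂ) (n : ℤ) (a : ℂ) :
    fOp lam χ (single n a) = fCoeff lam χ n • single (n - 1) a := by
  rw [fOp, lsum_single, LinearMap.smul_apply, lsingle_apply, fCoeff]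

theorem hOp_eigenvalue_injective (lam : ℂ) : Function.Injective fun n : ℤ => lam + 2 * (n : ℂ) :=
  fun m n h => by exact_mod_cast (by linear_combination h / 2 : (m : ℂ) = n)

theorem eq_top_of_invariant_of_fCoeff_ne_zero {lam χ : ℂ} (hχ : ∀ n, fCoeff lam χ n ≠ 0)
    {S : Submodule ℂ (ℤ →₀ ℂ)} (hS : S ≠ ⊥) (heS : ∀ v ∈ S, eOp v ∈ S)
    (hhS : ∀ v ∈ S, hOp lam v ∈ S) (hfS : ∀ v ∈ S, fOp lam χ v ∈ S) : S = ⊤ := by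
  obtain ⟨v, hvS, hv⟩ := (Submodule.ne_bot_iff S).mp hS
  obtain ⟨n, hn⟩ :=
    exists_single_one_mem_of_diagonal (hOp_eigenvalue_injective lam) (hOp_single lam) hhS hvS hv
  refine eq_top_of_forall_single_one_mem fun m => ?_
  induction m using Int.inductionOn' with
  | b => exact n
  | zero => exact hn
  | succ k _ hk => simpa [eOp_single] using heS _ hk
  | pred k _ hk =>
    have := hfS _ hk
    rwa [fOp_single, Submodule.smul_mem_iff _ (hχ k)] at this

theorem supported_Ioi_invariant {lam χ : ℂ} {n : ℤ} (hn : fCoeff lam χ (n + 1) = 0) :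
    (∀ v ∈ supported ℂ ℂ (Set.Ioi n), eOp v ∈ supported ℂ ℂ (Set.Ioi n)) ∧
    (∀ v ∈ supported ℂ ℂ (Set.Ioi n), hOp lam v ∈ supported ℂ ℂ (Set.Ioi n)) ∧
    (∀ v ∈ supported ℂ ℂ (Set.Ioi n), fOp lam χ v ∈ supported ℂ ℂ (Set.Ioi n)) := by
  refine ⟨mapsTo_supported_of_single_one fun i hi => ?_,
    mapsTo_supported_of_single_one fun i hi => ?_,
    mapsTo_supported_of_single_one fun i hi => ?_⟩
  · rw [eOp_single]
    exact single_mem_supported ℂ _ (by simp only [Set.mem_Ioi] at hi ⊢; omega)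
  · rw [hOp_single]
    exact Submodule.smul_mem _ _ (single_mem_supported ℂ _ hi)
  · rw [fOp_single]
    rcases eq_or_ne i (n + 1) with rfl | hi'
    · rw [hn, zero_smul]
      exact Submodule.zero_mem _
    · exact Submodule.smul_mem _ _
        (single_mem_supported ℂ _ (by simp only [Set.mem_Ioi] at hi ⊢; omega))

theorem supported_Ioi_ne_bot (n : ℤ) : supported ℂ ℂ (Set.Ioi n) ≠ ⊥ :=
  (Submodule.ne_bot_iff _).mpr
    ⟨single (n + 1) 1, single_mem_supported ℂ _ (by simp), by simp⟩

theorem supported_Ioi_ne_top (n : ℤ) : supported ℂ ℂ (Set.Ioi n) ≠ ⊤ := fun h => by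
  have := (mem_supported' ℂ (single n (1 : ℂ))).mp (h ▸ Submodule.mem_top) n (by simp)
  simp at this

/-- `E_{λ,χ}` has a nonzero proper sl₂-submodule if and only if there exists
`μ ∈ λ + 2ℤ` with `χ = μ²/2 + μ`. -/
theorem stmt_14 (lam χ : ℂ) :
    (∃ S : Submodule ℂ (ℤ →₀ ℂ), S ≠ ⊥ ∧ S ≠ ⊤ ∧
      (∀ v ∈ S, eOp v ∈ S) ∧ (∀ v ∈ S, hOp lam v ∈ S) ∧ (∀ v ∈ S, fOp lam χ v ∈ S)) ↔
    ∃ n : ℤ, χ = (lam + 2 * (n : ℂ)) ^ 2 / 2 + (lam + 2 * (n : ℂ)) := by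
  constructor
  · rintro ⟨S, hbot, htop, heS, hhS, hfS⟩
    by_contra! hχ
    have hc : ∀ m, fCoeff lam χ m ≠ 0 := fun m => by
      have := hχ (m - 1)
      rwa [ne_eq, ← fCoeff_add_one_eq_zero_iff, sub_add_cancel] at this
    exact htop (eq_top_of_invariant_of_fCoeff_ne_zero hc hbot heS hhS hfS)
  · rintro ⟨n, hn⟩
    exact ⟨supported ℂ ℂ (Set.Ioi n), supported_Ioi_ne_bot n, supported_Ioi_ne_top n,
      supported_Ioi_invariant ((fCoeff_add_one_eq_zero_iff lam χ n).mpr hn)⟩
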